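/- For infinitely many integers n there exists a primitive soluble permutation group G on a set of size n with I(G) ≥ 0.63·log₂(n) + 1. (Concretely, for every d ≥ 1 one may take n = 3^d.) -/

import Mathlib

/-- The pointwise stabiliser, inside the subgroup `H`, of a list of points. -/
def ptStab {G : Type*} [Group G] {Δ : Type*} [MulAction G Δ] (H : Subgroup G)
    (l : List Δ) : Subgroup G :=
  H ⊓ ⨅ δ ∈ l, MulAction.stabilizer G δ

/-- `l` is an irredundant base for the subgroup `H` acting on `Δ`: the pointwise
stabilisers of its prefixes are strictly decreasing, starting from `H` and ending
with the trivial group. -/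
def IsIrredundantBase {G : Type*} [Group G] {Δ : Type*} [MulAction G Δ] (H : Subgroup G)
    (l : List Δ) : Prop :=
  (∀ i < l.length, ptStab H (l.take (i + 1)) < ptStab H (l.take i)) ∧ ptStab H l = ⊥

/-- `I(H)`: the maximum length of an irredundant base for the subgroup `H` acting on `Δ`. -/
noncomputable def maxIrr {G : Type*} [Group G] (H : Subgroup G) (Δ : Type*) [MulAction G Δ] : ℕ :=
  sSup {k | ∃ l : List Δ, IsIrredundantBase H l ∧ l.length = k}

/-- A permutation group `G ≤ Sym(Δ)` is primitive if it is transitive and all of its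
blocks are trivial. -/
def IsPrimitiveSubgroup {Δ : Type*} (G : Subgroup (Equiv.Perm Δ)) : Prop :=
  MulAction.IsPretransitive G Δ ∧
    ∀ B : Set Δ, MulAction.IsBlock G B → B.Subsingleton ∨ B = Set.univ

/-!
Take `G = S₃ ≀ C_d` in its product action on `𝔽₃^d`, where `S₃ = Sym(𝔽₃) = AGL(1, 3)`; it is
soluble because `S₃` and `C_d` are. It contains all translations, so a block through `0` is an
`𝔽₃`-subspace, and it is stable under the stabiliser of `0`, which contains the coordinate sign
changes and the cyclic shifts of coordinates; such a subspace is `0` or everything, so `G` is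
primitive. The list `(0, e₁, …, e_d)` is an irredundant base of length `d + 1`: a translation
moves `0`, and the sign change at coordinate `i` fixes `0` and every `e_j` with `j < i` but moves
`e_i`. Finally `0.63 · log₂ 3 < 1`, so `0.63 · log₂ (3^d) + 1 ≤ d + 1`.
-/

open Equiv MulAction

instance Pi.isSolvable {ι G : Type*} [Group G] [Group.IsSolvable G] :
    Group.IsSolvable (ι → G) := by
  obtain ⟨n, hn⟩ := ‹Group.IsSolvable G›
  have key : ∀ k, derivedSeries (ι → G) k ≤ Subgroup.pi Set.univ fun _ => derivedSeries G k := by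
    intro k
    induction k with
    | zero => simp [Subgroup.pi_top]
    | succ k ih =>
      exact (Subgroup.commutator_mono ih ih).trans (Subgroup.commutator_pi_pi_le _ _)
  exact ⟨n, eq_bot_iff.mpr ((key n).trans (by simp [hn, Subgroup.pi_bot]))⟩

instance : Group.IsSolvable (Perm (ZMod 3)) :=
  have : IsZGroup (Perm (ZMod 3)) :=
    IsZGroup.of_squarefree (by rw [Nat.card_perm, Nat.card_zmod]; decide +kernel)
  inferInstance

lemma Equiv.Perm.eq_one_of_zmod_three {σ : Perm (ZMod 3)} (h0 : σ 0 = 0) (h1 : σ 1 = 1) :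
    σ = 1 := by
  revert σ
  decide

lemma MulAction.IsBlock.smul_mem_of_smul_mem {G X : Type*} [Group G] [MulAction G X] {B : Set X}
    (hB : IsBlock G B) {a : X} (ha : a ∈ B) {g : G} (hga : g • a ∈ B) {x : X} (hx : x ∈ B) :
    g • x ∈ B := by
  rw [← hB.smul_eq_of_mem ha hga]
  exact Set.smul_mem_smul_set hx

lemma isPrimitiveSubgroup_range_toPermHom {G X : Type*} [Group G] [MulAction G X]
    [IsPreprimitive G X] : IsPrimitiveSubgroup (toPermHom G X).range := by
  have : IsPreprimitive (toPermHom G X).range X :=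
    IsPreprimitive.of_surjective
      (f := (⟨id, fun _ _ => rfl⟩ : X →ₑ[(toPermHom G X).rangeRestrict] X)) Function.surjective_id
  exact ⟨inferInstance, fun B hB => hB.subsingleton_or_eq_univ⟩

instance {G X : Type*} [Group G] [MulAction G X] [Group.IsSolvable G] :
    Group.IsSolvable (toPermHom G X).range :=
  Group.isSolvable_of_surjective (toPermHom G X).rangeRestrict_surjective

section IrredundantBase

variable {G Δ : Type*} [Group G] [MulAction G Δ] {H : Subgroup G}

lemma mem_ptStab {l : List Δ} {g : G} : g ∈ ptStab H l ↔ g ∈ H ∧ ∀ δ ∈ l, g • δ = δ := by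
  simp [ptStab, Subgroup.mem_inf, Subgroup.mem_iInf, MulAction.mem_stabilizer_iff]

lemma ptStab_anti {l₁ l₂ : List Δ} (h : l₁ ⊆ l₂) : ptStab H l₂ ≤ ptStab H l₁ := fun g hg => by
  rw [mem_ptStab] at hg ⊢
  exact ⟨hg.1, fun δ hδ => hg.2 δ (h hδ)⟩

lemma ptStab_take_succ_lt {l : List Δ} {i : ℕ} (hi : i < l.length) {g : G}
    (hg : g ∈ ptStab H (l.take i)) (hmove : g • l[i] ≠ l[i]) :
    ptStab H (l.take (i + 1)) < ptStab H (l.take i) := by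
  refine lt_of_le_of_ne (ptStab_anti (List.take_subset_take_left _ i.le_succ)) fun h => hmove ?_
  rw [← h, mem_ptStab, ← List.take_append_getElem hi] at hg
  exact hg.2 _ (List.mem_append_right _ (List.mem_singleton_self _))

lemma IsIrredundantBase.length_lt_card [Finite G] {l : List Δ} (hl : IsIrredundantBase H l) :
    l.length < Nat.card (Subgroup G) := by
  have hanti : StrictAnti fun i : Fin (l.length + 1) => ptStab H (l.take i) :=
    Fin.strictAnti_iff_succ_lt.mpr fun i => hl.1 i i.2
  simpa using Nat.card_le_card_of_injective _ hanti.injective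

lemma IsIrredundantBase.length_le_maxIrr [Finite G] {l : List Δ} (hl : IsIrredundantBase H l) :
    l.length ≤ maxIrr H Δ :=
  le_csSup ⟨Nat.card (Subgroup G), by rintro _ ⟨l', hl', rfl⟩; exact hl'.length_lt_card.le⟩
    ⟨l, hl, rfl⟩

end IrredundantBase

namespace RegularWreathProduct

section ProductAction

variable {D Q Λ : Type*} [Group D] [Group Q] [MulAction D Λ]

-- The product action, not the imprimitive action on `Λ × Q` that Mathlib provides.
instance : MulAction (D ≀ᵣ Q) (Q → Λ) where
  smul w x p := w.left p • x (w.right⁻¹ * p)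
  one_smul x := by
    funext p
    change (1 : D) • x ((1 : Q)⁻¹ * p) = x p
    simp
  mul_smul a b x := by
    funext p
    change (a.left p * b.left (a.right⁻¹ * p)) • x ((a.right * b.right)⁻¹ * p) = _
    simp only [mul_inv_rev, mul_assoc, mul_smul]
    rfl

lemma smul_fun_apply (w : D ≀ᵣ Q) (x : Q → Λ) (p : Q) :
    (w • x) p = w.left p • x (w.right⁻¹ * p) := rfl

lemma inl_smul_apply (q : Q) (x : Q → Λ) : (inl q : D ≀ᵣ Q) • x = fun p => x (q⁻¹ * p) := by
  funext p
  simp [smul_fun_apply]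

lemma inl_smul_single [DecidableEq Q] [Zero Λ] (r q : Q) (a : Λ) :
    (inl r : D ≀ᵣ Q) • (Pi.single q a : Q → Λ) = Pi.single (r * q) a := by
  funext p
  simp only [inl_smul_apply, Pi.single_apply, inv_mul_eq_iff_eq_mul]

end ProductAction

def inr {D Q : Type*} [Group D] [Group Q] : (Q → D) →* D ≀ᵣ Q where
  toFun f := ⟨f, 1⟩
  map_one' := rfl
  map_mul' f g := by ext <;> simp [mul_def]

lemma inr_smul_apply {D Q Λ : Type*} [Group D] [Group Q] [MulAction D Λ] (f : Q → D)
    (x : Q → Λ) (p : Q) : (inr f • x) p = f p • x p := by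
  simp [smul_fun_apply, inr]

instance {D Q : Type*} [Group D] [Group Q] [Group.IsSolvable D] [Group.IsSolvable Q] :
    Group.IsSolvable (D ≀ᵣ Q) :=
  Group.isSolvable_of_ker_le_range inr rightHom fun w hw => ⟨w.left, by
    ext
    · rfl
    · exact (MonoidHom.mem_ker.mp hw).symm⟩

section SymThree

variable {Q : Type*} [Group Q]

def translation (v : Q → ZMod 3) : Perm (ZMod 3) ≀ᵣ Q := inr fun p => Equiv.addRight (v p)

@[simp] lemma translation_smul (v x : Q → ZMod 3) : translation v • x = x + v := by
  funext p
  simp [translation, inr_smul_apply]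

lemma exists_submodule_eq_of_isBlock {B : Set (Q → ZMod 3)}
    (hB : IsBlock (Perm (ZMod 3) ≀ᵣ Q) B) (h0 : 0 ∈ B) :
    ∃ S : Submodule (ZMod 3) (Q → ZMod 3), (S : Set (Q → ZMod 3)) = B := by
  let M : AddSubmonoid (Q → ZMod 3) :=
    { carrier := B
      zero_mem' := h0
      add_mem' := fun {x v} hx hv => by
        simpa using hB.smul_mem_of_smul_mem h0 (g := translation v) (by simpa using hv) hx }
  refine ⟨{ M with smul_mem' := fun c x hx => ?_ }, rfl⟩
  rw [← ZMod.natCast_zmod_val c, Nat.cast_smul_eq_nsmul]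
  exact M.nsmul_mem hx _

instance : IsPretransitive (Perm (ZMod 3) ≀ᵣ Q) (Q → ZMod 3) :=
  ⟨fun x y => ⟨translation (y - x), by simp⟩⟩

section NegAt

variable [DecidableEq Q]

def negAt (q : Q) : Perm (ZMod 3) ≀ᵣ Q := inr (Pi.mulSingle q (Equiv.neg _))

lemma negAt_smul_apply (q : Q) (x : Q → ZMod 3) (p : Q) :
    (negAt q • x) p = if p = q then -x p else x p := by
  rw [negAt, inr_smul_apply]
  by_cases h : p = q
  · subst h; simp
  · simp [h]

lemma negAt_smul_zero (q : Q) : negAt q • (0 : Q → ZMod 3) = 0 := by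
  funext p
  simp [negAt_smul_apply]

lemma negAt_smul_single_of_ne {q q' : Q} (h : q' ≠ q) :
    negAt q • (Pi.single q' 1 : Q → ZMod 3) = Pi.single q' 1 := by
  funext p
  rw [negAt_smul_apply]
  split_ifs with hp
  · subst hp; simp [h.symm]
  · rfl

lemma negAt_smul_single_ne (q : Q) :
    negAt q • (Pi.single q 1 : Q → ZMod 3) ≠ Pi.single q 1 := fun h => by
  have := congrFun h q
  rw [negAt_smul_apply, if_pos rfl, Pi.single_eq_same] at this
  exact absurd this (by decide)

lemma sub_negAt_smul (q : Q) (x : Q → ZMod 3) :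
    x - negAt q • x = Pi.single q (x q + x q) := by
  funext p
  rw [Pi.sub_apply, negAt_smul_apply, Pi.single_apply]
  split_ifs with h
  · subst h; ring
  · ring

-- `x - negAt q • x` is a nonzero multiple of `e_q` once `x q ≠ 0`, and shifts carry `e_q` to
-- every `e_p`.
lemma eq_top_of_negAt_smul_mem_of_inl_smul_mem [Finite Q]
    {S : Submodule (ZMod 3) (Q → ZMod 3)} (hS : S ≠ ⊥)
    (hneg : ∀ q : Q, ∀ x ∈ S, negAt q • x ∈ S)
    (hinl : ∀ q, ∀ x ∈ S, (inl q : Perm (ZMod 3) ≀ᵣ Q) • x ∈ S) : S = ⊤ := by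
  obtain ⟨x, hxS, hx0⟩ := S.exists_mem_ne_zero_of_ne_bot hS
  obtain ⟨q, hq⟩ : ∃ q, x q ≠ 0 := Function.ne_iff.mp hx0
  have hq2 : x q + x q ≠ 0 := by
    revert hq
    generalize x q = a
    decide +revert
  have hsingle_q : Pi.single q 1 ∈ S := by
    have := S.smul_mem (x q + x q)⁻¹ (S.sub_mem hxS (hneg q x hxS))
    rwa [sub_negAt_smul, ← Pi.single_smul', smul_eq_mul, inv_mul_cancel₀ hq2] at this
  have hsingle : ∀ p, Pi.single p 1 ∈ S := fun p => by
    have := hinl (p * q⁻¹) _ hsingle_q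
    rwa [inl_smul_single, inv_mul_cancel_right] at this
  rw [eq_top_iff, ← (Pi.basisFun (ZMod 3) Q).span_eq, Submodule.span_le]
  rintro _ ⟨p, rfl⟩
  simpa using hsingle p

lemma eq_one_of_smul_zero_of_smul_single {w : Perm (ZMod 3) ≀ᵣ Q}
    (h0 : w • (0 : Q → ZMod 3) = 0)
    (h1 : ∀ q : Q, w • (Pi.single q 1 : Q → ZMod 3) = Pi.single q 1) : w = 1 := by
  have hleft0 : ∀ p, w.left p 0 = 0 := fun p => congrFun h0 p
  have hright : w.right = 1 := by
    by_contra hne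
    have := congrFun (h1 1) 1
    rw [smul_fun_apply, Pi.single_eq_same, Pi.single_eq_of_ne (by simpa using hne)] at this
    exact absurd this (by simp [Perm.smul_def, hleft0])
  ext p : 2
  · refine Perm.eq_one_of_zmod_three (hleft0 p) ?_
    have := congrFun (h1 p) p
    rwa [smul_fun_apply, hright, inv_one, one_mul, Pi.single_eq_same] at this
  · exact hright

end NegAt

instance [Finite Q] : IsPreprimitive (Perm (ZMod 3) ≀ᵣ Q) (Q → ZMod 3) := by
  classical
  refine .of_isTrivialBlock_base 0 fun {B} h0 hB => ?_
  obtain ⟨S, rfl⟩ := exists_submodule_eq_of_isBlock hB h0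
  rcases eq_or_ne S ⊥ with rfl | hS
  · left
    simp
  · right
    rw [eq_top_of_negAt_smul_mem_of_inl_smul_mem hS
      (fun q _ hx => hB.smul_mem_of_smul_mem h0 (by rw [negAt_smul_zero]; exact h0) hx)
      (fun q _ hx => hB.smul_mem_of_smul_mem h0 (by rw [inl_smul_apply]; exact h0) hx)]
    rfl

end SymThree

end RegularWreathProduct

open RegularWreathProduct

section StandardBase

variable (Q : Type*) [Fintype Q] [DecidableEq Q]

noncomputable def standardBase : List (Q → ZMod 3) :=
  0 :: (Finset.univ : Finset Q).toList.map fun q => Pi.single q 1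

lemma length_standardBase : (standardBase Q).length = Fintype.card Q + 1 := by
  simp [standardBase]

theorem isIrredundantBase_standardBase [Group Q] :
    IsIrredundantBase (toPermHom (Perm (ZMod 3) ≀ᵣ Q) (Q → ZMod 3)).range (standardBase Q) := by
  set qs := (Finset.univ : Finset Q).toList with hqs
  constructor
  · intro i hi
    cases i with
    | zero =>
      refine ptStab_take_succ_lt hi (g := toPermHom _ _ (translation 1))
        (mem_ptStab.2 ⟨⟨_, rfl⟩, by simp⟩) fun h => ?_
      simp only [standardBase, List.getElem_cons_zero] at h
      simpa using congrFun h 1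
    | succ m =>
      have hm : m < qs.length := by
        rw [hqs, Finset.length_toList]
        simpa [standardBase] using hi
      refine ptStab_take_succ_lt hi (g := toPermHom _ _ (negAt qs[m]))
        (mem_ptStab.2 ⟨⟨_, rfl⟩, fun δ hδ => ?_⟩) ?_
      · simp only [standardBase, List.take_succ_cons, ← List.map_take, List.mem_cons,
          List.mem_map, List.mem_take_iff_getElem] at hδ
        rcases hδ with rfl | ⟨_, ⟨j, hj, rfl⟩, rfl⟩
        · simpa using negAt_smul_zero qs[m]
        · have hjm : qs[j] ≠ qs[m] := by
            rw [ne_eq, (Finset.nodup_toList _).getElem_inj_iff]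
            omega
          simpa using negAt_smul_single_of_ne hjm
      · simpa [standardBase] using negAt_smul_single_ne qs[m]
  · rw [eq_bot_iff]
    rintro _ hg
    obtain ⟨⟨w, rfl⟩, hfix⟩ := mem_ptStab.1 hg
    rw [eq_one_of_smul_zero_of_smul_single (hfix 0 (by simp [standardBase]))
      fun q => hfix _ (by simp [standardBase]), map_one]
    exact one_mem _

end StandardBase

lemma Real.logb_two_three_le : Real.logb 2 3 ≤ 100 / 63 := by
  have h : Real.logb 2 ((3 : ℝ) ^ 63) ≤ Real.logb 2 ((2 : ℝ) ^ 100) :=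
    Real.logb_le_logb_of_le (by norm_num) (by positivity) (by norm_num)
  rw [Real.logb_pow, Real.logb_pow, Real.logb_self_eq_one (by norm_num)] at h
  push_cast at h
  linarith

lemma logb_two_three_pow_le (n : ℕ) : 0.63 * Real.logb 2 (3 ^ n) ≤ n := by
  rw [Real.logb_pow]
  nlinarith [Real.logb_two_three_le, (Nat.cast_nonneg n : (0 : ℝ) ≤ n)]

/-- Corollary (second claim): for every `d ≥ 1` there is a primitive soluble permutation
group of degree `n = 3 ^ d` with `I(G) ≥ 0.63 log₂ n + 1`; in particular there are
infinitely many such degrees. -/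
theorem exists_primitive_solvable_with_maxIrr_ge (d : ℕ) (hd : 1 ≤ d) :
    ∃ (Δ : Type) (_ : Fintype Δ) (G : Subgroup (Equiv.Perm Δ)),
      Fintype.card Δ = 3 ^ d ∧ IsSolvable G ∧ IsPrimitiveSubgroup G ∧
      0.63 * Real.logb 2 (Fintype.card Δ) + 1 ≤ (maxIrr G Δ : ℝ) := by
  have : NeZero d := ⟨by omega⟩
  let Q := Multiplicative (ZMod d)
  have hcard : Fintype.card (Q → ZMod 3) = 3 ^ d := by simp [Q]
  -- `IsSolvable` is a deprecated alias rather than a class, hence the ascription below.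
  refine ⟨Q → ZMod 3, inferInstance, (toPermHom (Perm (ZMod 3) ≀ᵣ Q) (Q → ZMod 3)).range, hcard,
    (inferInstance : Group.IsSolvable _), isPrimitiveSubgroup_range_toPermHom, ?_⟩
  have hbase := (isIrredundantBase_standardBase Q).length_le_maxIrr
  rw [length_standardBase, show Fintype.card Q = d by simp [Q]] at hbase
  calc 0.63 * Real.logb 2 (Fintype.card (Q → ZMod 3)) + 1 ≤ d + 1 := by
        rw [hcard]
        push_cast
        linarith [logb_two_three_pow_le d]
    _ ≤ _ := by exact_mod_cast hbase
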